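/- arXiv:1508.05890 — 3 statements merged into one kernel-verified Lean document; each statement's English description precedes it below -/
import Mathlib

section
/- Define the generalized geometric sum coefficients χ_n(p, ℓ) by χ_n(0, ℓ) = 1 if ℓ = 0 and 0 otherwise, and χ_n(p+1, ℓ) = (n + ℓ)·χ_n(p, ℓ) + ℓ·χ_n(p, ℓ - 1). Then for complex δ with e^δ ≠ 1 and any p ∈ ℕ, the p-th derivative of δ ↦ e^{nδ}/(1 - e^δ) equals ∑_{ℓ=0}^{p} χ_n(p, ℓ)·e^{(n+ℓ)δ}/(1 - e^δ)^{ℓ+1}. -/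
/-!
Differentiating `e^{aδ} / (1 - e^δ)^(k+1)` gives `a` times itself plus `(k+1) e^{(a+1)δ} / (1 - e^δ)^(k+2)`.
So the terms `e^{(n+ℓ)δ} / (1 - e^δ)^(ℓ+1)` span a space closed under `d/dδ`, and the coefficients
of the `p`-th derivative satisfy precisely the recurrence defining `χ_n`.
-/

open Complex Finset

/-- The generalized geometric sum coefficients `χ_n(p, ℓ)`. -/
def chi (n : ℕ) : ℕ → ℕ → ℕ
  | 0, ℓ => if ℓ = 0 then 1 else 0
  | p + 1, ℓ => (n + ℓ) * chi n p ℓ + ℓ * chi n p (ℓ - 1)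

theorem chi_eq_zero_of_lt (n : ℕ) {p ℓ : ℕ} (h : p < ℓ) : chi n p ℓ = 0 := by
  induction p generalizing ℓ with
  | zero => simp [chi, Nat.pos_iff_ne_zero.mp h]
  | succ p ih => simp [chi, ih (Nat.lt_of_succ_lt h), ih (Nat.lt_sub_of_add_lt h)]

theorem sum_chi_succ_mul {R : Type*} [CommSemiring R] (n p : ℕ) (g : ℕ → R) :
    ∑ ℓ ∈ range (p + 2), (chi n (p + 1) ℓ : R) * g ℓ =
      ∑ ℓ ∈ range (p + 1), (chi n p ℓ : R) * ((n + ℓ) * g ℓ + (ℓ + 1) * g (ℓ + 1)) := by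
  have hsplit : ∀ ℓ, (chi n (p + 1) ℓ : R) * g ℓ =
      (n + ℓ) * chi n p ℓ * g ℓ + ℓ * chi n p (ℓ - 1) * g ℓ := by
    intro ℓ
    simp only [chi]
    push_cast
    ring
  simp only [hsplit, sum_add_distrib, mul_add]
  congr 1
  · rw [sum_range_succ, chi_eq_zero_of_lt n (Nat.lt_succ_self p)]
    simp only [Nat.cast_zero, mul_zero, zero_mul, add_zero]
    exact sum_congr rfl fun ℓ _ => by ring
  · rw [sum_range_succ']
    simp only [Nat.cast_zero, zero_mul, add_zero, Nat.add_sub_cancel]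
    exact sum_congr rfl fun ℓ _ => by push_cast; ring

noncomputable def geomTerm (a : ℂ) (k : ℕ) (z : ℂ) : ℂ :=
  exp (a * z) / (1 - exp z) ^ (k + 1)

theorem hasDerivAt_geomTerm (a : ℂ) (k : ℕ) {z : ℂ} (hz : exp z ≠ 1) :
    HasDerivAt (geomTerm a k)
      (a * geomTerm a k z + (k + 1) * geomTerm (a + 1) (k + 1) z) z := by
  have hne : 1 - exp z ≠ 0 := sub_ne_zero.mpr hz.symm
  have hnum : HasDerivAt (fun w => exp (a * w)) (exp (a * z) * a) z := by
    simpa using ((hasDerivAt_id z).const_mul a).cexp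
  have hden : HasDerivAt (fun w => (1 - exp w) ^ (k + 1))
      ((k + 1 : ℕ) * (1 - exp z) ^ k * -exp z) z := by
    simpa using ((hasDerivAt_const z (1 : ℂ)).fun_sub (hasDerivAt_exp z)).fun_pow (k + 1)
  refine (hnum.div hden (pow_ne_zero _ hne)).congr_deriv ?_
  simp only [geomTerm, add_mul, one_mul, exp_add]
  field_simp
  push_cast
  ring

theorem iteratedDeriv_geomTerm (n p : ℕ) {z : ℂ} (hz : exp z ≠ 1) :
    iteratedDeriv p (geomTerm n 0) z =
      ∑ ℓ ∈ range (p + 1), (chi n p ℓ : ℂ) * geomTerm (n + ℓ) ℓ z := by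
  induction p generalizing z with
  | zero => simp [chi]
  | succ p ih =>
    have hU : IsOpen {w : ℂ | exp w ≠ 1} := isOpen_ne.preimage continuous_exp
    have hnear : iteratedDeriv p (geomTerm n 0) =ᶠ[nhds z]
        fun w => ∑ ℓ ∈ range (p + 1), (chi n p ℓ : ℂ) * geomTerm (n + ℓ) ℓ w :=
      Filter.eventuallyEq_of_mem (hU.mem_nhds hz) fun w hw => ih hw
    have hderiv := HasDerivAt.fun_sum (u := range (p + 1)) fun ℓ _ =>
      (hasDerivAt_geomTerm ((n : ℂ) + ℓ) ℓ hz).const_mul (chi n p ℓ : ℂ)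
    rw [iteratedDeriv_succ, hnear.deriv_eq, hderiv.deriv, sum_chi_succ_mul]
    refine sum_congr rfl fun ℓ _ => ?_
    push_cast
    ring_nf

theorem iteratedDeriv_geom_ratio (n : ℕ) (p : ℕ) (δ : ℂ) (hδ : Complex.exp δ ≠ 1) :
    iteratedDeriv p (fun z : ℂ => Complex.exp ((n : ℂ) * z) / (1 - Complex.exp z)) δ =
      ∑ ℓ ∈ Finset.range (p + 1),
        (chi n p ℓ : ℂ) * Complex.exp (((n : ℂ) + ℓ) * δ) / (1 - Complex.exp δ) ^ (ℓ + 1) := by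
  have hf : (fun z : ℂ => exp ((n : ℂ) * z) / (1 - exp z)) = geomTerm n 0 := by
    ext z
    simp [geomTerm]
  simp only [hf, iteratedDeriv_geomTerm n p hδ, geomTerm, mul_div_assoc]
end

section
/- Let W have orthonormal columns spanning subspace W and let Q = [Q₁ Q₂] ∈ ℂ^{n×(q₁+q₂)} have orthonormal columns, with J = range(Q) and J₁ = range(Q₁). Then ∏_{k=1}^{q₁+q₂} σ_k(W*Q)² ≤ ∏_{k=1}^{q₁} σ_k(W*Q₁)², i.e., η(W, J) ≤ η(W, J₁). -/
open Matrix
open scoped ComplexOrder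

/-!
Both sides are determinants of Gram matrices: with `N = (WᴴQ)ᴴ(WᴴQ)`, the left side is `det N`
and the right side is `det N₁₁` for the leading `q₁ × q₁` block. Since `W` is an isometry,
`I - N = Qᴴ(I - WWᴴ)Q ≥ 0`, so `0 ≤ N ≤ I`. If `N₁₁` is invertible, `det N = det N₁₁ · det S`
for the Schur complement `S = N₂₂ - N₂₁ N₁₁⁻¹ N₁₂`, and `0 ≤ S ≤ N₂₂ ≤ I` forces `det S ≤ 1`;
if not, `N` is singular as well.
-/

/-- The singular values of a matrix: square roots of the eigenvalues of `MᴴM`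
(unordered indexing; products over all of them are order-independent). -/
noncomputable def singVals {a b : ℕ} (M : Matrix (Fin a) (Fin b) ℂ) : Fin b → ℝ :=
  fun i => Real.sqrt ((Matrix.posSemidef_conjTranspose_mul_self M).1.eigenvalues i)

namespace Matrix

variable {𝕜 : Type*} [RCLike 𝕜] {m n : Type*} [Fintype m] [Fintype n] [DecidableEq m]
  [DecidableEq n]

lemma IsHermitian.eigenvalues_le_one {A : Matrix n n 𝕜} (hA : A.IsHermitian)
    (h : (1 - A).PosSemidef) (i : n) : hA.eigenvalues i ≤ 1 := by
  have hv : star ⇑(hA.eigenvectorBasis i) ⬝ᵥ ⇑(hA.eigenvectorBasis i) = 1 := by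
    rw [dotProduct_comm, ← EuclideanSpace.inner_eq_star_dotProduct, inner_self_eq_norm_sq_to_K,
      hA.eigenvectorBasis.orthonormal.1 i]
    simp
  have hRayleigh := h.re_dotProduct_nonneg (hA.eigenvectorBasis i)
  rw [sub_mulVec, one_mulVec, dotProduct_sub, map_sub, hv, RCLike.one_re,
    ← hA.eigenvalues_eq] at hRayleigh
  linarith

lemma PosSemidef.det_le_one {A : Matrix n n 𝕜} (hA : A.PosSemidef) (h : (1 - A).PosSemidef) :
    A.det ≤ 1 := by
  rw [hA.1.det_eq_prod_eigenvalues, ← RCLike.ofReal_prod, ← RCLike.ofReal_one,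
    RCLike.ofReal_le_ofReal]
  exact Finset.prod_le_one (fun i _ ↦ hA.eigenvalues_nonneg i)
    (fun i _ ↦ hA.1.eigenvalues_le_one h i)

lemma PosSemidef.det_le_det_toBlocks₁₁ {A : Matrix (m ⊕ n) (m ⊕ n) 𝕜} (hA : A.PosSemidef)
    (h : (1 - A).PosSemidef) : A.det ≤ A.toBlocks₁₁.det := by
  by_cases hB : A.toBlocks₁₁.PosDef
  swap
  · have hA0 : A.det = 0 := by
      by_contra hA0
      exact hB ((hA.posDef_iff_det_ne_zero.2 hA0).submatrix Sum.inl_injective)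
    rw [hA0]
    exact (hA.submatrix Sum.inl).det_nonneg
  have : Invertible A.toBlocks₁₁ := invertibleOfIsUnitDet _ hB.det_pos.ne'.isUnit
  set B := A.toBlocks₁₁
  set C := A.toBlocks₁₂
  set D := A.toBlocks₂₂
  have hAeq : A = fromBlocks B C Cᴴ D := by
    conv_lhs => rw [← fromBlocks_toBlocks A]
    congr
    ext i j
    exact (congr_fun₂ hA.1 (Sum.inr i) (Sum.inl j)).symm
  have hS : (D - Cᴴ * B⁻¹ * C).PosSemidef := (PosDef.fromBlocks₁₁ C D hB).1 (hAeq ▸ hA)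
  have hS₁ : (1 - (D - Cᴴ * B⁻¹ * C)).PosSemidef := by
    rw [sub_sub_eq_add_sub, add_comm, add_sub_assoc]
    refine (hB.inv.posSemidef.conjTranspose_mul_mul_same C).add ?_
    rw [← submatrix_one _ (Sum.inr_injective (α := m))]
    exact h.submatrix Sum.inr
  calc A.det = B.det * (D - Cᴴ * B⁻¹ * C).det := by
        rw [hAeq, det_fromBlocks₁₁, invOf_eq_nonsing_inv]
    _ ≤ B.det := mul_le_of_le_one_right hB.det_pos.le (hS.det_le_one hS₁)

lemma PosSemidef.det_le_det_submatrix {A : Matrix n n 𝕜} (hA : A.PosSemidef)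
    (h : (1 - A).PosSemidef) {e : m → n} (he : Function.Injective e) :
    A.det ≤ (A.submatrix e e).det := by
  classical
  let σ : m ⊕ {x // x ∉ Set.range e} ≃ n :=
    ((Equiv.ofInjective e he).sumCongr (Equiv.refl _)).trans (Equiv.sumCompl _)
  have hσ : (A.submatrix σ σ).toBlocks₁₁ = A.submatrix e e := by
    ext i j
    simp [σ, toBlocks₁₁]
  rw [← det_submatrix_equiv_self σ, ← hσ]
  refine (hA.submatrix σ).det_le_det_toBlocks₁₁ ?_
  rw [← submatrix_one_equiv σ]
  exact h.submatrix σ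

lemma posSemidef_one_sub_mul_conjTranspose {W : Matrix n m 𝕜} (hW : Wᴴ * W = 1) :
    (1 - W * Wᴴ).PosSemidef := by
  have hproj : W * Wᴴ * (W * Wᴴ) = W * Wᴴ := by
    rw [Matrix.mul_assoc, ← Matrix.mul_assoc Wᴴ, hW, Matrix.one_mul]
  have hP : (1 - W * Wᴴ)ᴴ * (1 - W * Wᴴ) = 1 - W * Wᴴ := by
    rw [conjTranspose_sub, conjTranspose_one, conjTranspose_mul, conjTranspose_conjTranspose,
      sub_mul, mul_sub, mul_sub, hproj, one_mul, mul_one, sub_self, sub_zero, one_mul]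
  rw [← hP]
  exact posSemidef_conjTranspose_mul_self _

lemma posSemidef_conjTranspose_mul_self_sub {l : Type*} [Fintype l] {W : Matrix n m 𝕜}
    (hW : Wᴴ * W = 1) (Q : Matrix n l 𝕜) :
    (Qᴴ * Q - (Wᴴ * Q)ᴴ * (Wᴴ * Q)).PosSemidef := by
  have h : Qᴴ * Q - (Wᴴ * Q)ᴴ * (Wᴴ * Q) = Qᴴ * (1 - W * Wᴴ) * Q := by
    simp only [conjTranspose_mul, conjTranspose_conjTranspose, Matrix.mul_sub, Matrix.sub_mul,
      Matrix.mul_one, Matrix.mul_assoc]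
  rw [h]
  exact (posSemidef_one_sub_mul_conjTranspose hW).conjTranspose_mul_mul_same Q

end Matrix

lemma ofReal_prod_singVals_sq {a b : ℕ} (M : Matrix (Fin a) (Fin b) ℂ) :
    ((∏ k, singVals M k ^ 2 : ℝ) : ℂ) = (Mᴴ * M).det := by
  have hM := posSemidef_conjTranspose_mul_self M
  rw [hM.1.det_eq_prod_eigenvalues, Complex.ofReal_prod]
  refine Finset.prod_congr rfl fun k _ ↦ ?_
  rw [singVals, Real.sq_sqrt (hM.eigenvalues_nonneg k)]
  rfl

theorem efficiency_union_upper_bound_general (n m q₁ q₂ : ℕ)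
    (W : Matrix (Fin n) (Fin m) ℂ) (hW : Wᴴ * W = 1)
    (Q : Matrix (Fin n) (Fin (q₁ + q₂)) ℂ) (hQ : Qᴴ * Q = 1)
    (Q₁ : Matrix (Fin n) (Fin q₁) ℂ)
    (hQ₁ : Q₁ = Q.submatrix id (Fin.castAdd q₂)) :
    ∏ k, singVals (Wᴴ * Q) k ^ 2 ≤ ∏ k, singVals (Wᴴ * Q₁) k ^ 2 := by
  have hWQ₁ : Wᴴ * Q₁ = (Wᴴ * Q).submatrix id (Fin.castAdd q₂) := by
    rw [hQ₁, submatrix_mul _ _ _ id _ Function.bijective_id, submatrix_id_id]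
  have hGram₁ : (Wᴴ * Q₁)ᴴ * (Wᴴ * Q₁)
      = ((Wᴴ * Q)ᴴ * (Wᴴ * Q)).submatrix (Fin.castAdd q₂) (Fin.castAdd q₂) := by
    rw [hWQ₁, conjTranspose_submatrix, ← submatrix_mul _ _ _ id _ Function.bijective_id]
  have hContraction : (1 - (Wᴴ * Q)ᴴ * (Wᴴ * Q)).PosSemidef :=
    hQ ▸ posSemidef_conjTranspose_mul_self_sub hW Q
  rw [← Complex.real_le_real, ofReal_prod_singVals_sq, ofReal_prod_singVals_sq, hGram₁]
  exact (posSemidef_conjTranspose_mul_self _).det_le_det_submatrix hContraction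
    (Fin.castAdd_injective q₁ q₂)

theorem efficiency_union_upper_bound (n m q₁ q₂ : ℕ) (hm : q₁ + q₂ ≤ m) (hmn : m ≤ n)
    (W : Matrix (Fin n) (Fin m) ℂ) (hW : Wᴴ * W = 1)
    (Q : Matrix (Fin n) (Fin (q₁ + q₂)) ℂ) (hQ : Qᴴ * Q = 1)
    (Q₁ : Matrix (Fin n) (Fin q₁) ℂ)
    (hQ₁ : Q₁ = Q.submatrix id (Fin.castAdd q₂)) :
    ∏ k, singVals (Wᴴ * Q) k ^ 2 ≤ ∏ k, singVals (Wᴴ * Q₁) k ^ 2 :=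
  efficiency_union_upper_bound_general n m q₁ q₂ W hW Q hQ Q₁ hQ₁
end

section
/- Let A ∈ ℂ^{n×q} have full column rank, W ∈ ℂ^{n×m} have orthonormal columns (m ≥ q) with W*A of full column rank, and b ∈ ℂⁿ. If y minimizes ‖WW*(Ay − b)‖₂, then ‖A*Ay − A*b‖₂ ≤ [cos φ₁ · sin φ_q / cos² φ_q] · ‖A‖₂ · ‖P_A^⊥ b‖₂, where cos φ_k = σ_k(W*U₁) for the orthonormal range basis U₁ of A, sin φ_q = σ₁(W*U₂) with U₂ an orthonormal basis of range(A)^⊥, and P_A^⊥ = I − U₁U₁*. -/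
open Matrix
open scoped ComplexOrder

/-- The Euclidean 2-norm of a vector. -/
noncomputable def vnorm {n : ℕ} (v : Fin n → ℂ) : ℝ :=
  Real.sqrt (∑ i, ‖v i‖ ^ 2)

/-!
Put `c = U₁ᴴ (A y - b)` and `d = U₂ᴴ b`. Since `A` and `U₁` have the same range, every residual
`A z - b` equals `U₁ x - U₂ d` with `x = U₁ᴴ (A z - b)`, and every `x` arises this way; as `W` is an
isometry, `c` therefore minimises `‖G₁ x - G₂ d‖` with `Gᵢ = Wᴴ Uᵢ`, whose normal equations read
`G₁ᴴ G₁ c = G₁ᴴ G₂ d`. Hence `σ_min(G₁)² ‖c‖ ≤ σ_max(G₁) σ_max(G₂) ‖d‖`, while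
`Aᴴ A y - Aᴴ b = Aᴴ U₁ c` has norm at most `σ_max(A) ‖c‖` and `‖d‖ = ‖(1 - U₁ U₁ᴴ) b‖`.
-/

theorem Matrix.mulVec_injective_of_rank_eq_card {m n K : Type*} [Fintype m] [Fintype n] [Field K]
    {B : Matrix m n K} (h : B.rank = Fintype.card n) : Function.Injective B.mulVec :=
  mulVec_injective_iff.mpr <| linearIndependent_iff_card_eq_finrank_span.mpr <| by
    rw [Set.finrank, ← rank_eq_finrank_span_cols, h]

section

variable {k l p : ℕ}

theorem vnorm_eq_norm_toLp (v : Fin k → ℂ) :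
    vnorm v = ‖(WithLp.toLp 2 v : EuclideanSpace ℂ (Fin k))‖ :=
  (EuclideanSpace.norm_eq _).symm

theorem vnorm_nonneg (v : Fin k → ℂ) : 0 ≤ vnorm v := Real.sqrt_nonneg _

theorem vnorm_sq (v : Fin k → ℂ) : vnorm v ^ 2 = ∑ i, ‖v i‖ ^ 2 :=
  Real.sq_sqrt (by positivity)

theorem vnorm_sq_eq_re_dotProduct (v : Fin k → ℂ) : vnorm v ^ 2 = (star v ⬝ᵥ v).re := by
  rw [vnorm_eq_norm_toLp, @norm_sq_eq_re_inner ℂ, EuclideanSpace.inner_toLp_toLp, dotProduct_comm]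
  rfl

theorem norm_star_dotProduct_le (v w : Fin k → ℂ) : ‖star v ⬝ᵥ w‖ ≤ vnorm v * vnorm w := by
  rw [vnorm_eq_norm_toLp, vnorm_eq_norm_toLp, dotProduct_comm, ← EuclideanSpace.inner_toLp_toLp]
  exact norm_inner_le_norm _ _

theorem vnorm_mulVec_of_conjTranspose_mul_self {M : Matrix (Fin k) (Fin l) ℂ} (hM : Mᴴ * M = 1)
    (x : Fin l → ℂ) : vnorm (M *ᵥ x) = vnorm x := by
  rw [← sq_eq_sq₀ (vnorm_nonneg _) (vnorm_nonneg _), vnorm_sq_eq_re_dotProduct,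
    vnorm_sq_eq_re_dotProduct, star_mulVec, ← dotProduct_mulVec, mulVec_mulVec, hM, one_mulVec]

theorem vnorm_mulVec_sq_le (M : Matrix (Fin k) (Fin l) ℂ) (x : Fin l → ℂ) :
    vnorm (M *ᵥ x) ^ 2 ≤ vnorm x * vnorm ((Mᴴ * M) *ᵥ x) := by
  rw [vnorm_sq_eq_re_dotProduct, star_mulVec, ← dotProduct_mulVec, mulVec_mulVec]
  exact (Complex.re_le_norm _).trans (norm_star_dotProduct_le _ _)

theorem conjTranspose_mulVec_sub_eq_zero_of_forall_vnorm_le (M : Matrix (Fin k) (Fin l) ℂ)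
    (u : Fin k → ℂ) (x : Fin l → ℂ) (hx : ∀ z, vnorm (M *ᵥ x - u) ≤ vnorm (M *ᵥ z - u)) :
    Mᴴ *ᵥ (M *ᵥ x - u) = 0 := by
  let K := LinearMap.range (toLpLin 2 2 M)
  let u' : EuclideanSpace ℂ (Fin k) := WithLp.toLp 2 u
  have hmem (z : Fin l → ℂ) : WithLp.toLp 2 (M *ᵥ z) ∈ K := ⟨WithLp.toLp 2 z, toLpLin_toLp _ _ _ _⟩
  have hdist (z : Fin l → ℂ) : ‖u' - WithLp.toLp 2 (M *ᵥ z)‖ = vnorm (M *ᵥ z - u) := by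
    rw [vnorm_eq_norm_toLp, norm_sub_rev, WithLp.toLp_sub]
  have hbdd : BddBelow (Set.range fun w : K => ‖u' - w‖) :=
    ⟨0, by rintro _ ⟨w, rfl⟩; exact norm_nonneg _⟩
  have hmin : ‖u' - WithLp.toLp 2 (M *ᵥ x)‖ = ⨅ w : K, ‖u' - w‖ := by
    refine le_antisymm (le_ciInf ?_) (ciInf_le hbdd ⟨_, hmem x⟩)
    rintro ⟨w, z, rfl⟩
    change _ ≤ ‖_ - toLpLin 2 2 M z‖
    rw [← WithLp.toLp_ofLp (p := 2) z, toLpLin_toLp, toLin'_apply, hdist, hdist]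
    exact hx _
  -- `M x` is the orthogonal projection of `u` onto the range of `M`.
  have horth := (K.norm_eq_iInf_iff_inner_eq_zero (hmem x)).1 hmin _ (hmem (Mᴴ *ᵥ (u - M *ᵥ x)))
  rw [← WithLp.toLp_sub, EuclideanSpace.inner_toLp_toLp] at horth
  rw [← dotProduct_star_self_eq_zero, ← neg_sub u, mulVec_neg, star_neg, neg_dotProduct,
    dotProduct_neg, neg_neg, star_mulVec, conjTranspose_conjTranspose, ← dotProduct_mulVec,
    dotProduct_comm]
  exact horth

theorem vnorm_diagonal_mulVec_le {d : Fin k → ℂ} {C : ℝ} (hC0 : 0 ≤ C) (hC : ∀ i, ‖d i‖ ≤ C)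
    (x : Fin k → ℂ) : vnorm (diagonal d *ᵥ x) ≤ C * vnorm x := by
  rw [← pow_le_pow_iff_left₀ (vnorm_nonneg _) (by positivity [vnorm_nonneg x]) two_ne_zero,
    mul_pow, vnorm_sq, vnorm_sq, Finset.mul_sum]
  gcongr with i
  rw [mulVec_diagonal, norm_mul, mul_pow]
  gcongr
  exact hC i

theorem le_vnorm_diagonal_mulVec {d : Fin k → ℂ} {c : ℝ} (hc0 : 0 ≤ c) (hc : ∀ i, c ≤ ‖d i‖)
    (x : Fin k → ℂ) : c * vnorm x ≤ vnorm (diagonal d *ᵥ x) := by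
  rw [← pow_le_pow_iff_left₀ (by positivity [vnorm_nonneg x]) (vnorm_nonneg _) two_ne_zero,
    mul_pow, vnorm_sq, vnorm_sq, Finset.mul_sum]
  gcongr with i
  rw [mulVec_diagonal, norm_mul, mul_pow]
  gcongr
  exact hc i

theorem Matrix.IsHermitian.vnorm_mulVec {H : Matrix (Fin k) (Fin k) ℂ} (hH : H.IsHermitian)
    (x : Fin k → ℂ) :
    vnorm (H *ᵥ x) = vnorm (diagonal (RCLike.ofReal ∘ hH.eigenvalues) *ᵥ
      (star (hH.eigenvectorUnitary : Matrix (Fin k) (Fin k) ℂ) *ᵥ x)) := by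
  have hU := hH.eigenvectorUnitary.2
  conv_lhs => rw [hH.spectral_theorem, Unitary.conjStarAlgAut_apply]
  rw [← mulVec_mulVec, ← mulVec_mulVec, vnorm_mulVec_of_conjTranspose_mul_self]
  exact Unitary.star_mul_self_of_mem hU

theorem Matrix.IsHermitian.vnorm_star_eigenvectorUnitary_mulVec {H : Matrix (Fin k) (Fin k) ℂ}
    (hH : H.IsHermitian) (x : Fin k → ℂ) :
    vnorm (star (hH.eigenvectorUnitary : Matrix (Fin k) (Fin k) ℂ) *ᵥ x) = vnorm x := by
  refine vnorm_mulVec_of_conjTranspose_mul_self ?_ x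
  rw [← star_eq_conjTranspose, star_star]
  exact Unitary.mul_star_self_of_mem hH.eigenvectorUnitary.2

theorem Matrix.IsHermitian.vnorm_mulVec_le {H : Matrix (Fin k) (Fin k) ℂ} (hH : H.IsHermitian)
    {C : ℝ} (hC0 : 0 ≤ C) (hC : ∀ i, |hH.eigenvalues i| ≤ C) (x : Fin k → ℂ) :
    vnorm (H *ᵥ x) ≤ C * vnorm x := by
  rw [hH.vnorm_mulVec, ← hH.vnorm_star_eigenvectorUnitary_mulVec x]
  refine vnorm_diagonal_mulVec_le hC0 (fun i => ?_) _
  simpa only [Function.comp_apply, RCLike.norm_ofReal] using hC i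

theorem Matrix.IsHermitian.le_vnorm_mulVec {H : Matrix (Fin k) (Fin k) ℂ} (hH : H.IsHermitian)
    {c : ℝ} (hc0 : 0 ≤ c) (hc : ∀ i, c ≤ |hH.eigenvalues i|) (x : Fin k → ℂ) :
    c * vnorm x ≤ vnorm (H *ᵥ x) := by
  rw [hH.vnorm_mulVec, ← hH.vnorm_star_eigenvectorUnitary_mulVec x]
  refine le_vnorm_diagonal_mulVec hc0 (fun i => ?_) _
  simpa only [Function.comp_apply, RCLike.norm_ofReal] using hc i

theorem abs_eigenvalues_conjTranspose_mul_self (G : Matrix (Fin k) (Fin l) ℂ) (i : Fin l) :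
    |(posSemidef_conjTranspose_mul_self G).1.eigenvalues i| = singVals G i ^ 2 := by
  rw [abs_of_nonneg ((posSemidef_conjTranspose_mul_self G).eigenvalues_nonneg i), singVals,
    Real.sq_sqrt ((posSemidef_conjTranspose_mul_self G).eigenvalues_nonneg i)]

theorem vnorm_conjTranspose_mul_self_mulVec_le (G : Matrix (Fin k) (Fin l) ℂ) (x : Fin l → ℂ) :
    vnorm ((Gᴴ * G) *ᵥ x) ≤ (⨆ i, singVals G i) ^ 2 * vnorm x := by
  refine (posSemidef_conjTranspose_mul_self G).1.vnorm_mulVec_le (sq_nonneg _) (fun i => ?_) x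
  rw [abs_eigenvalues_conjTranspose_mul_self]
  gcongr
  · exact Real.sqrt_nonneg _
  · exact le_ciSup (Set.finite_range _).bddAbove i

theorem iInf_singVals_sq_mul_vnorm_le (G : Matrix (Fin k) (Fin l) ℂ) (x : Fin l → ℂ) :
    (⨅ i, singVals G i) ^ 2 * vnorm x ≤ vnorm ((Gᴴ * G) *ᵥ x) := by
  refine (posSemidef_conjTranspose_mul_self G).1.le_vnorm_mulVec (sq_nonneg _) (fun i => ?_) x
  rw [abs_eigenvalues_conjTranspose_mul_self]
  gcongr
  · exact Real.iInf_nonneg fun i => Real.sqrt_nonneg _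
  · exact ciInf_le (Set.finite_range _).bddBelow i

theorem iSup_singVals_nonneg (G : Matrix (Fin k) (Fin l) ℂ) : 0 ≤ ⨆ i, singVals G i :=
  Real.iSup_nonneg fun _ => Real.sqrt_nonneg _

theorem vnorm_mulVec_le_iSup_singVals (G : Matrix (Fin k) (Fin l) ℂ) (x : Fin l → ℂ) :
    vnorm (G *ᵥ x) ≤ (⨆ i, singVals G i) * vnorm x := by
  rw [← pow_le_pow_iff_left₀ (vnorm_nonneg _)
    (mul_nonneg (iSup_singVals_nonneg G) (vnorm_nonneg x)) two_ne_zero]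
  calc vnorm (G *ᵥ x) ^ 2 ≤ vnorm x * vnorm ((Gᴴ * G) *ᵥ x) := vnorm_mulVec_sq_le G x
    _ ≤ vnorm x * ((⨆ i, singVals G i) ^ 2 * vnorm x) := by
      gcongr
      · exact vnorm_nonneg x
      · exact vnorm_conjTranspose_mul_self_mulVec_le G x
    _ = ((⨆ i, singVals G i) * vnorm x) ^ 2 := by ring

theorem vnorm_conjTranspose_mulVec_le_iSup_singVals (G : Matrix (Fin k) (Fin l) ℂ)
    (v : Fin k → ℂ) : vnorm (Gᴴ *ᵥ v) ≤ (⨆ i, singVals G i) * vnorm v := by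
  have h : vnorm (Gᴴ *ᵥ v) ^ 2 ≤ vnorm v * ((⨆ i, singVals G i) * vnorm (Gᴴ *ᵥ v)) :=
    calc vnorm (Gᴴ *ᵥ v) ^ 2 ≤ vnorm v * vnorm ((Gᴴᴴ * Gᴴ) *ᵥ v) := vnorm_mulVec_sq_le Gᴴ v
      _ = vnorm v * vnorm (G *ᵥ (Gᴴ *ᵥ v)) := by rw [conjTranspose_conjTranspose, mulVec_mulVec]
      _ ≤ vnorm v * ((⨆ i, singVals G i) * vnorm (Gᴴ *ᵥ v)) := by
        gcongr
        · exact vnorm_nonneg v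
        · exact vnorm_mulVec_le_iSup_singVals G _
  rcases (vnorm_nonneg (Gᴴ *ᵥ v)).eq_or_lt with h0 | h0
  · rw [← h0]
    exact mul_nonneg (iSup_singVals_nonneg G) (vnorm_nonneg v)
  · exact le_of_mul_le_mul_right (by linarith) h0

theorem vnorm_le_vnorm_conjTranspose_mul_self_mulVec_div {G : Matrix (Fin k) (Fin l) ℂ}
    (hG : Function.Injective G.mulVec) (x : Fin l → ℂ) :
    vnorm x ≤ vnorm ((Gᴴ * G) *ᵥ x) / (⨅ i, singVals G i) ^ 2 := by
  rcases isEmpty_or_nonempty (Fin l) with _ | _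
  -- for `l = 0` the infimum is the junk value `0`, and `x = 0`
  · rw [show vnorm x = 0 by simp [vnorm]]
    exact div_nonneg (vnorm_nonneg _) (sq_nonneg _)
  · obtain ⟨i, hi⟩ := exists_eq_ciInf_of_finite (f := singVals G)
    have hpos : 0 < ⨅ i, singVals G i :=
      hi ▸ Real.sqrt_pos.mpr ((PosDef.conjTranspose_mul_self G hG).eigenvalues_pos i)
    rw [le_div_iff₀ (by positivity), mul_comm]
    exact iInf_singVals_sq_mul_vnorm_le G x

theorem vnorm_le_of_conjTranspose_mul_self_mulVec_eq {G₁ : Matrix (Fin k) (Fin l) ℂ}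
    {G₂ : Matrix (Fin k) (Fin p) ℂ} (hG₁ : Function.Injective G₁.mulVec) {c : Fin l → ℂ}
    {d : Fin p → ℂ} (h : (G₁ᴴ * G₁) *ᵥ c = G₁ᴴ *ᵥ (G₂ *ᵥ d)) :
    vnorm c ≤ (⨆ i, singVals G₁ i) * (⨆ i, singVals G₂ i) / (⨅ i, singVals G₁ i) ^ 2 * vnorm d :=
  calc vnorm c ≤ vnorm ((G₁ᴴ * G₁) *ᵥ c) / (⨅ i, singVals G₁ i) ^ 2 :=
        vnorm_le_vnorm_conjTranspose_mul_self_mulVec_div hG₁ c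
    _ ≤ (⨆ i, singVals G₁ i) * ((⨆ i, singVals G₂ i) * vnorm d) / (⨅ i, singVals G₁ i) ^ 2 := by
        rw [h]
        gcongr
        exact (vnorm_conjTranspose_mulVec_le_iSup_singVals G₁ _).trans
          (mul_le_mul_of_nonneg_left (vnorm_mulVec_le_iSup_singVals G₂ d) (iSup_singVals_nonneg G₁))
    _ = _ := by ring

end

section ProjectedLeastSquares

variable {n m q r : ℕ} {A U₁ : Matrix (Fin n) (Fin q) ℂ} {U₂ : Matrix (Fin n) (Fin r) ℂ}

theorem mul_conjTranspose_mul_eq_self_of_eq_mul {B : Matrix (Fin q) (Fin q) ℂ}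
    (hU₁ : U₁ᴴ * U₁ = 1) (hA : A = U₁ * B) : U₁ * U₁ᴴ * A = A := by
  rw [hA, ← Matrix.mul_assoc, Matrix.mul_assoc U₁, hU₁, Matrix.mul_one]

theorem exists_mulVec_eq_of_eq_mul_diagonal_mul {S : Fin q → ℝ} {V : Matrix (Fin q) (Fin q) ℂ}
    (hS : ∀ i, 0 < S i) (hV : Vᴴ * V = 1)
    (hSVD : A = U₁ * Matrix.diagonal (fun i => (S i : ℂ)) * Vᴴ) (x : Fin q → ℂ) :
    ∃ z, A *ᵥ z = U₁ *ᵥ x := by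
  have hD : (diagonal fun i => (S i : ℂ)) * diagonal (fun i => (S i : ℂ)⁻¹) = 1 := by
    rw [diagonal_mul_diagonal, ← diagonal_one]
    exact congrArg diagonal (funext fun i => mul_inv_cancel₀ (by exact_mod_cast (hS i).ne'))
  refine ⟨V *ᵥ (diagonal (fun i => (S i : ℂ)⁻¹) *ᵥ x), ?_⟩
  rw [hSVD, mulVec_mulVec, mulVec_mulVec, Matrix.mul_assoc, Matrix.mul_assoc,
    ← Matrix.mul_assoc Vᴴ, hV, Matrix.one_mul, Matrix.mul_assoc, hD, Matrix.mul_one]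

theorem sub_eq_mulVec_sub_mulVec (hcomp : U₁ * U₁ᴴ + U₂ * U₂ᴴ = 1) (hU₂A : U₂ᴴ * A = 0)
    (b : Fin n → ℂ) (z : Fin q → ℂ) :
    A *ᵥ z - b = U₁ *ᵥ (U₁ᴴ *ᵥ (A *ᵥ z - b)) - U₂ *ᵥ (U₂ᴴ *ᵥ b) := by
  conv_lhs => rw [← one_mulVec (A *ᵥ z - b), ← hcomp]
  rw [add_mulVec, ← mulVec_mulVec, ← mulVec_mulVec, mulVec_sub U₂ᴴ, mulVec_mulVec z, hU₂A,
    zero_mulVec, zero_sub, mulVec_neg, ← sub_eq_add_neg]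

theorem mulVec_injective_conjTranspose_mul {W : Matrix (Fin n) (Fin m) ℂ}
    (hU₁ : U₁ᴴ * U₁ = 1) (hrange : ∀ x, ∃ z, A *ᵥ z = U₁ *ᵥ x)
    (hWA : Function.Injective (W * Wᴴ * A).mulVec) : Function.Injective (Wᴴ * U₁).mulVec := by
  intro x x' hx
  obtain ⟨z, hz⟩ := hrange x
  obtain ⟨z', hz'⟩ := hrange x'
  have hzz : z = z' := hWA <| by
    simp only [← mulVec_mulVec, hz, hz']
    rw [mulVec_mulVec x, mulVec_mulVec x']
    exact congrArg _ hx
  have hU := congrArg (U₁ᴴ *ᵥ ·) (hz.symm.trans (hzz ▸ hz'))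
  simpa only [mulVec_mulVec, hU₁, one_mulVec] using hU

theorem conjTranspose_mul_self_mulVec_eq_of_forall_vnorm_le {W : Matrix (Fin n) (Fin m) ℂ}
    {b : Fin n → ℂ} {y : Fin q → ℂ} (hU₁ : U₁ᴴ * U₁ = 1) (hW : Wᴴ * W = 1)
    (hrange : ∀ x, ∃ z, A *ᵥ z = U₁ *ᵥ x)
    (hres : ∀ z, A *ᵥ z - b = U₁ *ᵥ (U₁ᴴ *ᵥ (A *ᵥ z - b)) - U₂ *ᵥ (U₂ᴴ *ᵥ b))
    (hy : ∀ z, vnorm ((W * Wᴴ) *ᵥ (A *ᵥ y - b)) ≤ vnorm ((W * Wᴴ) *ᵥ (A *ᵥ z - b))) :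
    ((Wᴴ * U₁)ᴴ * (Wᴴ * U₁)) *ᵥ (U₁ᴴ *ᵥ (A *ᵥ y - b)) =
      (Wᴴ * U₁)ᴴ *ᵥ ((Wᴴ * U₂) *ᵥ (U₂ᴴ *ᵥ b)) := by
  have hproj (x : Fin q → ℂ) : vnorm ((W * Wᴴ) *ᵥ (U₁ *ᵥ x - U₂ *ᵥ (U₂ᴴ *ᵥ b))) =
      vnorm ((Wᴴ * U₁) *ᵥ x - (Wᴴ * U₂) *ᵥ (U₂ᴴ *ᵥ b)) := by
    rw [← mulVec_mulVec, vnorm_mulVec_of_conjTranspose_mul_self hW, mulVec_sub, mulVec_mulVec,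
      mulVec_mulVec]
  have hmin (x : Fin q → ℂ) : vnorm ((Wᴴ * U₁) *ᵥ (U₁ᴴ *ᵥ (A *ᵥ y - b)) - (Wᴴ * U₂) *ᵥ (U₂ᴴ *ᵥ b))
      ≤ vnorm ((Wᴴ * U₁) *ᵥ x - (Wᴴ * U₂) *ᵥ (U₂ᴴ *ᵥ b)) := by
    obtain ⟨z, hz⟩ := hrange (x + U₁ᴴ *ᵥ b)
    have hzx : U₁ᴴ *ᵥ (A *ᵥ z - b) = x := by
      rw [mulVec_sub, hz, mulVec_mulVec, hU₁, one_mulVec, add_sub_cancel_right]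
    have := hy z
    rwa [hres y, hres z, hzx, hproj, hproj] at this
  have := conjTranspose_mulVec_sub_eq_zero_of_forall_vnorm_le _ _ _ hmin
  rwa [mulVec_sub, sub_eq_zero, mulVec_mulVec] at this

end ProjectedLeastSquares

theorem projected_ls_normal_equation_bound_general (n m q r : ℕ)
    (A U₁ : Matrix (Fin n) (Fin q) ℂ) (U₂ : Matrix (Fin n) (Fin r) ℂ)
    (S : Fin q → ℝ) (V : Matrix (Fin q) (Fin q) ℂ)
    (W : Matrix (Fin n) (Fin m) ℂ) (b : Fin n → ℂ)
    (hU₁ : U₁ᴴ * U₁ = 1) (hU₂ : U₂ᴴ * U₂ = 1) (horth : U₁ᴴ * U₂ = 0)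
    (hcomp : U₁ * U₁ᴴ + U₂ * U₂ᴴ = 1)
    (hS : ∀ i, 0 < S i) (hV : Vᴴ * V = 1)
    (hSVD : A = U₁ * Matrix.diagonal (fun i => (S i : ℂ)) * Vᴴ)
    (hW : Wᴴ * W = 1) (hWA : (W * Wᴴ * A).rank = q)
    (y : Fin q → ℂ)
    (hy : ∀ z : Fin q → ℂ,
      vnorm ((W * Wᴴ).mulVec (A.mulVec y - b)) ≤
        vnorm ((W * Wᴴ).mulVec (A.mulVec z - b))) :
    vnorm ((Aᴴ * A).mulVec y - Aᴴ.mulVec b) ≤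
      ((⨆ i, singVals (Wᴴ * U₁) i) * (⨆ i, singVals (Wᴴ * U₂) i) /
          (⨅ i, singVals (Wᴴ * U₁) i) ^ 2) *
        (⨆ i, singVals A i) * vnorm ((1 - U₁ * U₁ᴴ).mulVec b) := by
  have hAU : U₁ * U₁ᴴ * A = A :=
    mul_conjTranspose_mul_eq_self_of_eq_mul hU₁ (hSVD.trans (Matrix.mul_assoc _ _ _))
  have hU₂A : U₂ᴴ * A = 0 := by
    rw [← hAU, ← Matrix.mul_assoc, ← Matrix.mul_assoc, ← conjTranspose_conjTranspose U₁,
      ← conjTranspose_mul U₁ᴴ, horth, conjTranspose_zero, Matrix.zero_mul, Matrix.zero_mul]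
  have hrange := exists_mulVec_eq_of_eq_mul_diagonal_mul hS hV hSVD
  have hG₁ := mulVec_injective_conjTranspose_mul hU₁ hrange
    (mulVec_injective_of_rank_eq_card (hWA.trans (Fintype.card_fin q).symm))
  have hc := vnorm_le_of_conjTranspose_mul_self_mulVec_eq hG₁
    (conjTranspose_mul_self_mulVec_eq_of_forall_vnorm_le hU₁ hW hrange
      (sub_eq_mulVec_sub_mulVec hcomp hU₂A b) hy)
  have hlhs : (Aᴴ * A) *ᵥ y - Aᴴ *ᵥ b = Aᴴ *ᵥ (U₁ *ᵥ (U₁ᴴ *ᵥ (A *ᵥ y - b))) := by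
    rw [mulVec_mulVec, mulVec_mulVec, ← conjTranspose_conjTranspose U₁, ← conjTranspose_mul,
      ← conjTranspose_mul, conjTranspose_conjTranspose, ← Matrix.mul_assoc, hAU, mulVec_sub,
      mulVec_mulVec]
  have hrhs : (1 - U₁ * U₁ᴴ) *ᵥ b = U₂ *ᵥ (U₂ᴴ *ᵥ b) := by
    rw [← hcomp, add_sub_cancel_left, mulVec_mulVec]
  rw [hlhs, hrhs, vnorm_mulVec_of_conjTranspose_mul_self hU₂]
  calc _ ≤ (⨆ i, singVals A i) * vnorm (U₁ *ᵥ (U₁ᴴ *ᵥ (A *ᵥ y - b))) :=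
        vnorm_conjTranspose_mulVec_le_iSup_singVals A _
    _ ≤ _ := by
        rw [vnorm_mulVec_of_conjTranspose_mul_self hU₁, mul_comm _ (⨆ i, singVals A i), mul_assoc]
        exact mul_le_mul_of_nonneg_left hc (iSup_singVals_nonneg A)

theorem projected_ls_normal_equation_bound (n m q r : ℕ)
    (hqm : q ≤ m) (hmn : m ≤ n) (hqr : q + r = n)
    (A U₁ : Matrix (Fin n) (Fin q) ℂ) (U₂ : Matrix (Fin n) (Fin r) ℂ)
    (S : Fin q → ℝ) (V : Matrix (Fin q) (Fin q) ℂ)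
    (W : Matrix (Fin n) (Fin m) ℂ) (b : Fin n → ℂ)
    (hU₁ : U₁ᴴ * U₁ = 1) (hU₂ : U₂ᴴ * U₂ = 1) (horth : U₁ᴴ * U₂ = 0)
    (hcomp : U₁ * U₁ᴴ + U₂ * U₂ᴴ = 1)
    (hS : ∀ i, 0 < S i) (hV : Vᴴ * V = 1) (hV' : V * Vᴴ = 1)
    (hSVD : A = U₁ * Matrix.diagonal (fun i => (S i : ℂ)) * Vᴴ)
    (hW : Wᴴ * W = 1) (hWA : (W * Wᴴ * A).rank = q)
    (y : Fin q → ℂ)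
    (hy : ∀ z : Fin q → ℂ,
      vnorm ((W * Wᴴ).mulVec (A.mulVec y - b)) ≤
        vnorm ((W * Wᴴ).mulVec (A.mulVec z - b))) :
    vnorm ((Aᴴ * A).mulVec y - Aᴴ.mulVec b) ≤
      ((⨆ i, singVals (Wᴴ * U₁) i) * (⨆ i, singVals (Wᴴ * U₂) i) /
          (⨅ i, singVals (Wᴴ * U₁) i) ^ 2) *
        (⨆ i, singVals A i) * vnorm ((1 - U₁ * U₁ᴴ).mulVec b) :=
  projected_ls_normal_equation_bound_general n m q r A U₁ U₂ S V W b hU₁ hU₂ horth hcomp hS hV hSVD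
    hW hWA y hy
end
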